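/- arXiv:1801.02876 — 3 statements merged into one kernel-verified Lean document; each statement's English description precedes it below -/
import Mathlib

section
/- Let X be a random variable on a countably infinite alphabet X and Y a random variable such that the decreasing rearrangement P_{X|Y}↓ of the regular conditional distribution of X given Y is almost surely equal to a fixed distribution R. Then R majorizes the marginal distribution P_X, i.e., ∑_{x=1}^k P_X↓(x) ≤ ∑_{x=1}^k R(x) for every k ≥ 1. -/
/-!
Each top-`k` sum of the marginal `P_X = ∑_y q y • W y` is a finite sum, so it commutes with the
average over `y`; for every `y` of positive probability the inner sum is at most the top-`k` sum
of `W y`, which is `∑_{i<k} R i` by hypothesis, and averaging this constant against `q` gives it back.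
-/

noncomputable section

def IsPmf {α : Type*} (p : α → ℝ) : Prop := (∀ x, 0 ≤ p x) ∧ ∑' x, p x = 1

def topSum (p : ℕ → ℝ) (k : ℕ) : ℝ :=
  sSup {t : ℝ | ∃ s : Finset ℕ, s.card = k ∧ t = ∑ x ∈ s, p x}

namespace IsPmf

variable {α : Type*} {p : α → ℝ}

lemma summable (hp : IsPmf p) : Summable p := by
  by_contra h
  simpa [tsum_eq_zero_of_not_summable h] using hp.2

lemma sum_le_one (hp : IsPmf p) (s : Finset α) : ∑ x ∈ s, p x ≤ 1 :=
  hp.2 ▸ hp.summable.sum_le_tsum s fun x _ => hp.1 x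

lemma le_one (hp : IsPmf p) (x : α) : p x ≤ 1 := by
  simpa using hp.sum_le_one {x}

lemma summable_mul_of_nonneg_of_le_one (hp : IsPmf p) {f : α → ℝ} (hf₀ : ∀ x, 0 ≤ f x)
    (hf₁ : ∀ x, f x ≤ 1) : Summable fun x => p x * f x :=
  hp.summable.of_nonneg_of_le (fun x => mul_nonneg (hp.1 x) (hf₀ x))
    fun x => mul_le_of_le_one_right (hp.1 x) (hf₁ x)

end IsPmf

lemma sum_le_topSum {p : ℕ → ℝ} (hp : IsPmf p) {s : Finset ℕ} {k : ℕ} (hs : s.card = k) :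
    ∑ x ∈ s, p x ≤ topSum p k :=
  le_csSup ⟨1, by rintro t ⟨u, -, rfl⟩; exact hp.sum_le_one u⟩ ⟨s, hs, rfl⟩

lemma topSum_le_of_forall_sum_le {p : ℕ → ℝ} {k : ℕ} {C : ℝ}
    (h : ∀ s : Finset ℕ, s.card = k → ∑ x ∈ s, p x ≤ C) : topSum p k ≤ C :=
  csSup_le ⟨_, Finset.range k, Finset.card_range k, rfl⟩ (by rintro t ⟨s, hs, rfl⟩; exact h s hs)

lemma sum_tsum_mul_le {α β : Type*} {q : β → ℝ} {W : β → α → ℝ} (hq : IsPmf q)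
    (hW : ∀ y, IsPmf (W y)) {s : Finset α} {C : ℝ} (hC : ∀ y, q y ≠ 0 → ∑ x ∈ s, W y x ≤ C) :
    ∑ x ∈ s, ∑' y, q y * W y x ≤ C := by
  have hterm : ∀ y, q y * ∑ x ∈ s, W y x ≤ q y * C := fun y => by
    by_cases hy : q y = 0
    · simp [hy]
    · exact mul_le_mul_of_nonneg_left (hC y hy) (hq.1 y)
  calc ∑ x ∈ s, ∑' y, q y * W y x
      = ∑' y, q y * ∑ x ∈ s, W y x := by
        rw [← Summable.tsum_finsetSum fun x _ =>
          hq.summable_mul_of_nonneg_of_le_one (fun y => (hW y).1 x) fun y => (hW y).le_one x]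
        simp only [Finset.mul_sum]
    _ ≤ ∑' y, q y * C :=
        Summable.tsum_le_tsum hterm
          (hq.summable_mul_of_nonneg_of_le_one (fun y => Finset.sum_nonneg fun x _ => (hW y).1 x)
            fun y => (hW y).sum_le_one s)
          (hq.summable.mul_right C)
    _ = C := by rw [tsum_mul_right, hq.2, one_mul]

theorem stmt_4_general {β : Type*} (q : β → ℝ) (W : β → ℕ → ℝ) (R : ℕ → ℝ)
    (hq : IsPmf q) (hW : ∀ y, IsPmf (W y))
    (hconst : ∀ y, q y ≠ 0 → ∀ k, topSum (W y) k = ∑ i ∈ Finset.range k, R i) :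
    ∀ k, topSum (fun x => ∑' y, q y * W y x) k ≤ ∑ i ∈ Finset.range k, R i := fun k =>
  topSum_le_of_forall_sum_le fun _ hs =>
    sum_tsum_mul_le hq hW fun y hy => (sum_le_topSum (hW y) hs).trans (hconst y hy k).le

/-- If the decreasing rearrangement of the conditional distribution `P_{X|Y}`
is almost surely equal to a fixed (decreasing) distribution `R` — expressed by
requiring that for every `y` of positive probability the top-`k` sums of
`P_{X|Y=y}` equal the first `k` masses of `R` — then `R` majorizes the marginal
`P_X`: `∑_{x=1}^k P_X↓(x) ≤ ∑_{x=1}^k R(x)` for all `k`. -/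
theorem stmt_4 {β : Type*} (q : β → ℝ) (W : β → ℕ → ℝ) (R : ℕ → ℝ)
    (hq : IsPmf q) (hW : ∀ y, IsPmf (W y)) (hR : IsPmf R) (hRanti : Antitone R)
    (hconst : ∀ y, q y ≠ 0 → ∀ k, topSum (W y) k = ∑ i ∈ Finset.range k, R i) :
    ∀ k, topSum (fun x => ∑' y, q y * W y x) k ≤ ∑ i ∈ Finset.range k, R i :=
  stmt_4_general q W R hq hW hconst
end
end

section
/- Fix a list size L ≥ 1 and a real γ > 0. There exists a sequence of probability distributions P_n on the countably infinite alphabet X = {1,2,...} such that the list-decoding error without side information P_e^{(L)}(P_n) = 1 − ∑_{x=1}^L P_n↓(x) tends to 0, yet H(P_n) converges to γ + log L; in particular, taking X_n ~ P_n independent of any Y_n, the error probability P_e^{(L)}(X_n|Y_n) vanishes while H(X_n|Y_n) − log L does not vanish relative to H(X_n). Concretely, with δ_n → 0, δ_n ∈ (0,1), and p_n chosen so that δ_n h₂(p_n)/p_n = γ and 0 < p_n ≤ min{1, (1−δ_n)/(δ_n L)}, the distribution P_n(x) = (1−δ_n)/L for 1 ≤ x ≤ L and P_n(x) = δ_n p_n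 (1−p_n)^{x−L−1} for x ≥ L+1 satisfies P_e^{(L)}(P_n) = δ_n and H(P_n) = h₂(δ_n) + (1−δ_n) log L + δ_n h₂(p_n)/p_n. -/
/-!
The first `L` symbols each carry `(1 - δ) / L`, which dominates every tail mass `δ p (1 - p) ^ k`
because `δ p ≤ (1 - δ) / L`; so the `L` largest masses add up to `1 - δ`. The tail is a geometric
law scaled by `δ`: it contributes `-δ log δ + δ h₂(p) / p` to the entropy, and the head contributes
`-(1 - δ) log (1 - δ) + (1 - δ) log L`. With `δ h₂(p) / p = γ` held fixed and `h₂(δ) → 0`, the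
entropy tends to `γ + log L` while the error `δ` vanishes.
-/

noncomputable section
open Filter Topology

/-- Shannon entropy (natural logarithm). -/
def shEnt (p : ℕ → ℝ) : ℝ := ∑' x, Real.negMulLog (p x)

/-- Binary entropy function. -/
def binEnt (u : ℝ) : ℝ := Real.negMulLog u + Real.negMulLog (1 - u)

open Real

theorem binEnt_eq_binEntropy : binEnt = binEntropy :=
  funext fun u => (binEntropy_eq_negMulLog_add_negMulLog_one_sub u).symm

theorem IsPmf.of_hasSum {α : Type*} {p : α → ℝ} (hp : ∀ x, 0 ≤ p x) (h : HasSum p 1) :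
    IsPmf p :=
  ⟨hp, h.tsum_eq⟩

theorem topSum_eq_of_forall_le {p : ℕ → ℝ} {k : ℕ} {m : ℝ} (s : Finset ℕ) (hs : s.card = k)
    (hps : ∀ x ∈ s, p x = m) (hle : ∀ x, p x ≤ m) : topSum p k = k * m := by
  refine IsGreatest.csSup_eq ⟨⟨s, hs, ?_⟩, ?_⟩
  · rw [Finset.sum_congr rfl hps, Finset.sum_const, hs, nsmul_eq_mul]
  · rintro t ⟨s', hs', rfl⟩
    calc ∑ x ∈ s', p x ≤ ∑ _x ∈ s', m := Finset.sum_le_sum fun x _ => hle x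
      _ = k * m := by rw [Finset.sum_const, hs', nsmul_eq_mul]

/-- `-c r^k log (c r^k) = -(log c) c r^k - (c log r) k r^k`: a geometric and an arithmetico-geometric
series. -/
theorem hasSum_negMulLog_mul_geometric (c : ℝ) {r : ℝ} (hr0 : 0 ≤ r) (hr1 : r < 1) :
    HasSum (fun k : ℕ => negMulLog (c * r ^ k))
      (negMulLog c / (1 - r) - c * r * log r / (1 - r) ^ 2) := by
  have hr : ‖r‖ < 1 := by rwa [norm_of_nonneg hr0]
  have h := ((hasSum_geometric_of_lt_one hr0 hr1).mul_left (negMulLog c)).add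
    ((hasSum_coe_mul_geometric_of_norm_lt_one hr).mul_left (-c * log r))
  rw [show negMulLog c / (1 - r) - c * r * log r / (1 - r) ^ 2
      = negMulLog c * (1 - r)⁻¹ + -c * log r * (r / (1 - r) ^ 2) by ring]
  refine h.congr_fun fun k => ?_
  rw [negMulLog_mul]
  simp only [negMulLog, log_pow]
  ring

def uniformGeomTail (L : ℕ) (d q : ℝ) (x : ℕ) : ℝ :=
  if x = 0 then 0 else if x ≤ L then (1 - d) / L else d * q * (1 - q) ^ (x - L - 1)

section uniformGeomTail

variable {L : ℕ} {d q : ℝ}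

theorem uniformGeomTail_of_mem_Icc {x : ℕ} (hx : x ∈ Finset.Icc 1 L) :
    uniformGeomTail L d q x = (1 - d) / L := by
  rw [Finset.mem_Icc] at hx
  simp [uniformGeomTail, Nat.one_le_iff_ne_zero.mp hx.1, hx.2]

theorem uniformGeomTail_add (k : ℕ) :
    uniformGeomTail L d q (k + (L + 1)) = d * q * (1 - q) ^ k := by
  simp [uniformGeomTail, show ¬k + (L + 1) ≤ L by omega, show k + (L + 1) - L - 1 = k by omega]

theorem sum_range_comp_uniformGeomTail {φ : ℝ → ℝ} (hφ : φ 0 = 0) :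
    ∑ x ∈ Finset.range (L + 1), φ (uniformGeomTail L d q x) = L * φ ((1 - d) / L) := by
  have hhead : ∀ i ∈ Finset.range L, φ (uniformGeomTail L d q (i + 1)) = φ ((1 - d) / L) :=
    fun i hi => by
      rw [uniformGeomTail_of_mem_Icc
        (Finset.mem_Icc.mpr ⟨Nat.le_add_left 1 i, Finset.mem_range.mp hi⟩)]
  rw [Finset.sum_range_succ', Finset.sum_congr rfl hhead, Finset.sum_const, Finset.card_range,
    nsmul_eq_mul]
  simp [uniformGeomTail, hφ]

theorem hasSum_comp_uniformGeomTail {φ : ℝ → ℝ} (hφ : φ 0 = 0) {a : ℝ}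
    (htail : HasSum (fun k : ℕ => φ (d * q * (1 - q) ^ k)) a) :
    HasSum (fun x => φ (uniformGeomTail L d q x)) (a + L * φ ((1 - d) / L)) := by
  rw [← sum_range_comp_uniformGeomTail hφ]
  exact (hasSum_nat_add_iff (L + 1)).mp (by simpa only [uniformGeomTail_add] using htail)

theorem uniformGeomTail_nonneg (hd0 : 0 ≤ d) (hd1 : d ≤ 1) (hq0 : 0 ≤ q) (hq1 : q ≤ 1)
    (x : ℕ) : 0 ≤ uniformGeomTail L d q x := by
  have : 0 ≤ 1 - d := by linarith
  have : 0 ≤ 1 - q := by linarith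
  unfold uniformGeomTail
  split_ifs <;> positivity

theorem uniformGeomTail_le (hd0 : 0 ≤ d) (hd1 : d ≤ 1) (hq0 : 0 ≤ q) (hq1 : q ≤ 1)
    (hdq : d * q ≤ (1 - d) / L) (x : ℕ) : uniformGeomTail L d q x ≤ (1 - d) / L := by
  have : 0 ≤ 1 - d := by linarith
  unfold uniformGeomTail
  split_ifs
  · positivity
  · rfl
  · calc d * q * (1 - q) ^ (x - L - 1) ≤ d * q * 1 := by
          gcongr
          exact pow_le_one₀ (by linarith) (by linarith)
      _ ≤ (1 - d) / L := by rwa [mul_one]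

theorem hasSum_uniformGeomTail (hL : L ≠ 0) (hq0 : 0 < q) (hq1 : q ≤ 1) :
    HasSum (uniformGeomTail L d q) 1 := by
  have htail := (hasSum_geometric_of_lt_one (by linarith) (by linarith : 1 - q < 1)).mul_left
    (d * q)
  have h := hasSum_comp_uniformGeomTail (L := L) (φ := id) rfl htail
  have hL' : (L : ℝ) ≠ 0 := Nat.cast_ne_zero.mpr hL
  rwa [id, sub_sub_cancel, mul_inv_cancel_right₀ hq0.ne', mul_div_cancel₀ _ hL',
    add_sub_cancel] at h

theorem topSum_uniformGeomTail (hL : L ≠ 0) (hd0 : 0 ≤ d) (hd1 : d ≤ 1) (hq0 : 0 ≤ q)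
    (hq1 : q ≤ 1) (hdq : d * q ≤ (1 - d) / L) : topSum (uniformGeomTail L d q) L = 1 - d := by
  rw [topSum_eq_of_forall_le (Finset.Icc 1 L) (by simp) (fun x => uniformGeomTail_of_mem_Icc)
    (uniformGeomTail_le hd0 hd1 hq0 hq1 hdq)]
  field_simp

theorem hasSum_negMulLog_uniformGeomTail (hL : L ≠ 0) (hd1 : d < 1) (hq0 : 0 < q)
    (hq1 : q ≤ 1) :
    HasSum (fun x => negMulLog (uniformGeomTail L d q x))
      (binEnt d + (1 - d) * log L + d * binEnt q / q) := by
  have h := hasSum_comp_uniformGeomTail (L := L) negMulLog_zero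
    (hasSum_negMulLog_mul_geometric (d * q) (by linarith) (by linarith : 1 - q < 1))
  have hq : q ≠ 0 := hq0.ne'
  have hL' : (L : ℝ) ≠ 0 := Nat.cast_ne_zero.mpr hL
  convert h using 1
  rw [sub_sub_cancel, negMulLog_mul]
  simp only [binEnt, negMulLog, log_div (by linarith : 1 - d ≠ 0) hL']
  field_simp
  ring

end uniformGeomTail

theorem stmt_14_general (L : ℕ) (hL : 1 ≤ L) (γ : ℝ)
    (δ p : ℕ → ℝ)
    (hδ0 : ∀ n, 0 < δ n) (hδ1 : ∀ n, δ n < 1)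
    (hδlim : Tendsto δ atTop (𝓝 0))
    (hp0 : ∀ n, 0 < p n)
    (hp1 : ∀ n, p n ≤ min 1 ((1 - δ n) / (δ n * L)))
    (hγeq : ∀ n, δ n * binEnt (p n) / p n = γ) :
    let P : ℕ → ℕ → ℝ := fun n x =>
      if x = 0 then 0
      else if x ≤ L then (1 - δ n) / L
      else δ n * p n * (1 - p n) ^ (x - L - 1)
    (∀ n, IsPmf (P n)) ∧
    (∀ n, 1 - topSum (P n) L = δ n) ∧
    (∀ n, shEnt (P n) =
      binEnt (δ n) + (1 - δ n) * Real.log L + δ n * binEnt (p n) / p n) ∧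
    Tendsto (fun n => shEnt (P n)) atTop (𝓝 (γ + Real.log L)) ∧
    Tendsto (fun n => 1 - topSum (P n) L) atTop (𝓝 0) := by
  intro P
  have hP n : P n = uniformGeomTail L (δ n) (p n) := rfl
  have hL0 : L ≠ 0 := Nat.one_le_iff_ne_zero.mp hL
  have hp1' n : p n ≤ 1 := (hp1 n).trans (min_le_left _ _)
  have hdp n : δ n * p n ≤ (1 - δ n) / L := by
    have := mul_le_mul_of_nonneg_left ((hp1 n).trans (min_le_right _ _)) (hδ0 n).le
    rwa [← mul_div_assoc, mul_div_mul_left _ _ (hδ0 n).ne'] at this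
  have hTop n : 1 - topSum (P n) L = δ n := by
    rw [hP, topSum_uniformGeomTail hL0 (hδ0 n).le (hδ1 n).le (hp0 n).le (hp1' n) (hdp n)]
    ring
  have hEnt n : shEnt (P n) =
      binEnt (δ n) + (1 - δ n) * Real.log L + δ n * binEnt (p n) / p n :=
    (hasSum_negMulLog_uniformGeomTail hL0 (hδ1 n) (hp0 n) (hp1' n)).tsum_eq
  refine ⟨fun n => IsPmf.of_hasSum (uniformGeomTail_nonneg (hδ0 n).le (hδ1 n).le (hp0 n).le
    (hp1' n)) (hasSum_uniformGeomTail hL0 (hp0 n) (hp1' n)), hTop, hEnt, ?_, ?_⟩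
  · have hcont : Continuous binEnt := binEnt_eq_binEntropy ▸ binEntropy_continuous
    have hlim : Tendsto (fun n => binEnt (δ n) + (1 - δ n) * Real.log L + γ) atTop
        (𝓝 (binEnt 0 + (1 - 0) * Real.log L + γ)) :=
      (((hcont.tendsto 0).comp hδlim).add
        ((tendsto_const_nhds.sub hδlim).mul tendsto_const_nhds)).add tendsto_const_nhds
    rw [show binEnt 0 + (1 - 0) * Real.log L + γ = γ + Real.log L by
      rw [binEnt_eq_binEntropy, binEntropy_zero]; ring] at hlim
    simpa only [hEnt, hγeq] using hlim
  · simpa only [hTop] using hδlim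

/-- A counterexample source (Example 4): for fixed list size `L` and `γ > 0`,
the distributions `P_n` (uniform mass `(1−δ_n)/L` on `{1,…,L}` plus a geometric
tail) have vanishing list decoding error `P_e^{(L)}(P_n) = δ_n → 0`, yet
`H(P_n) = h₂(δ_n) + (1−δ_n) log L + δ_n h₂(p_n)/p_n → γ + log L`. -/
theorem stmt_14 (L : ℕ) (hL : 1 ≤ L) (γ : ℝ) (hγ : 0 < γ)
    (δ p : ℕ → ℝ)
    (hδ0 : ∀ n, 0 < δ n) (hδ1 : ∀ n, δ n < 1)
    (hδlim : Tendsto δ atTop (𝓝 0))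
    (hp0 : ∀ n, 0 < p n)
    (hp1 : ∀ n, p n ≤ min 1 ((1 - δ n) / (δ n * L)))
    (hγeq : ∀ n, δ n * binEnt (p n) / p n = γ) :
    let P : ℕ → ℕ → ℝ := fun n x =>
      if x = 0 then 0
      else if x ≤ L then (1 - δ n) / L
      else δ n * p n * (1 - p n) ^ (x - L - 1)
    (∀ n, IsPmf (P n)) ∧
    (∀ n, 1 - topSum (P n) L = δ n) ∧
    (∀ n, shEnt (P n) =
      binEnt (δ n) + (1 - δ n) * Real.log L + δ n * binEnt (p n) / p n) ∧
    Tendsto (fun n => shEnt (P n)) atTop (𝓝 (γ + Real.log L)) ∧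
    Tendsto (fun n => 1 - topSum (P n) L) atTop (𝓝 0) :=
  stmt_14_general L hL γ δ p hδ0 hδ1 hδlim hp0 hp1 hγeq
end
end

section
/- Let φ : P(X) → [0,∞] be symmetric, concave (with respect to convex combinations), bounded below, and lower semicontinuous, where X is countably infinite. Then for any pair of random variables (X, Y): (i) h_φ(X|Y) := E[φ(P_{X|Y})] ≤ φ(P_X); and (ii) for any deterministic map g : X → X, h_φ(g(X)|Y) ≤ h_φ(X|Y), provided φ is symmetric and quasiconcave, so that φ is Schur-concave. -/
noncomputable section
open Filter Topology

theorem pmfSummable {α : Type*} {p : α → ℝ} (h : IsPmf p) : Summable p := by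
  by_contra hs
  have h2 := h.2
  rw [tsum_eq_zero_of_not_summable hs] at h2
  norm_num at h2

theorem pmfLeOne {α : Type*} {p : α → ℝ} (h : IsPmf p) (x : α) : p x ≤ 1 :=
  h.2 ▸ Summable.le_tsum (pmfSummable h) x (fun _ _ => h.1 _)

def mergeMap (f : ℕ → ℕ) (p : ℕ → ℝ) : ℕ → ℝ := fun a => ∑' x, if f x = a then p x else 0

theorem fiberSummable {f : ℕ → ℕ} {p : ℕ → ℝ} (h : IsPmf p) (a : ℕ) :
    Summable (fun x => if f x = a then p x else 0) := by
  apply Summable.of_nonneg_of_le (fun x => ?_) (fun x => ?_) (pmfSummable h) <;>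
    · split <;> simp [h.1 x]

theorem ofReal_mergeMap {f : ℕ → ℕ} {p : ℕ → ℝ} (h : IsPmf p) (a : ℕ) :
    ENNReal.ofReal (mergeMap f p a) = ∑' x, if f x = a then ENNReal.ofReal (p x) else 0 := by
  rw [mergeMap, ENNReal.ofReal_tsum_of_nonneg (fun x => by split <;> simp [h.1 x]) (fiberSummable h a)]
  congr 1; funext x; split <;> simp

theorem pmf_mergeMap {f : ℕ → ℕ} {p : ℕ → ℝ} (h : IsPmf p) : IsPmf (mergeMap f p) := by
  have hnn : ∀ a, 0 ≤ mergeMap f p a := fun a => tsum_nonneg (fun x => by split <;> simp [h.1 x])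
  have key : ∑' a, ENNReal.ofReal (mergeMap f p a) = 1 := by
    have : ∀ a, ENNReal.ofReal (mergeMap f p a) = ∑' x, if f x = a then ENNReal.ofReal (p x) else 0 :=
      ofReal_mergeMap h
    rw [tsum_congr this, ENNReal.tsum_comm]
    have : ∀ x : ℕ, (∑' a, if f x = a then ENNReal.ofReal (p x) else 0) = ENNReal.ofReal (p x) := by
      intro x
      exact tsum_eq_single (f x) (fun b hb => by simp [Ne.symm hb, hb]) |>.trans (by simp)
    rw [tsum_congr this, ← ENNReal.ofReal_tsum_of_nonneg h.1 (pmfSummable h), h.2,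
      ENNReal.ofReal_one]
  constructor
  · exact hnn
  · have hs : Summable (mergeMap f p) := by
      have := ENNReal.summable_toReal (by rw [key]; exact ENNReal.one_ne_top)
      simpa [ENNReal.toReal_ofReal, hnn] using this
    have : ENNReal.ofReal (∑' a, mergeMap f p a) = 1 := by
      rw [ENNReal.ofReal_tsum_of_nonneg hnn hs, key]
    have h0 : 0 ≤ ∑' a, mergeMap f p a := tsum_nonneg hnn
    rw [← ENNReal.ofReal_one] at this
    exact (ENNReal.ofReal_eq_ofReal_iff h0 (by norm_num)).mp this

theorem mergeMap_eq_sum {f : ℕ → ℕ} {p : ℕ → ℝ} {S : Finset ℕ} (hf : ∀ x ∉ S, f x = x) (a : ℕ) :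
    mergeMap f p a = ∑ x ∈ insert a S, if f x = a then p x else 0 := by
  apply tsum_eq_sum
  intro x hx
  simp only [Finset.mem_insert, not_or] at hx
  rw [hf x hx.2]
  simp [hx.1]

section Phi
variable (φ : (ℕ → ℝ) → ENNReal)
    (hsym : ∀ (p : ℕ → ℝ) (σ : Equiv.Perm ℕ), φ (p ∘ σ) = φ p)
    (hqconc : ∀ (c : ENNReal) (p r : ℕ → ℝ), IsPmf p → IsPmf r →
      ∀ l : ℝ, 0 ≤ l → l ≤ 1 → c ≤ φ p → c ≤ φ r →
      c ≤ φ (fun x => l * p x + (1 - l) * r x))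

include hsym hqconc in
theorem mergeStep {i j : ℕ} (hij : i ≠ j) {q : ℕ → ℝ} (hq : IsPmf q) :
    φ (mergeMap (Function.update id i j) q) ≤ φ q := by
  set u := Function.update id i j with hu
  have hus : ∀ x ∉ ({i} : Finset ℕ), u x = x := by
    intro x hx; simp only [Finset.mem_singleton] at hx
    simp [hu, Function.update_of_ne hx]
  -- explicit form of the merged pmf
  have hval : ∀ a, mergeMap u q a = if a = i then 0 else if a = j then q i + q j else q a := by
    intro a
    rw [mergeMap_eq_sum hus]
    by_cases hai : a = i
    · subst hai
      rw [Finset.insert_eq_self.mpr (Finset.mem_singleton_self a)]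
      simp [hu, Function.update_self, Ne.symm hij, hij]
    · rw [Finset.sum_insert (by simp [hai])]
      simp only [Finset.sum_singleton, hu, Function.update_self, Function.update_of_ne hai, id]
      by_cases haj : a = j
      · simp [haj, hai, Ne.symm hij, add_comm]
      · simp [hai, haj, Ne.symm haj]
  have hqm : IsPmf (mergeMap u q) := pmf_mergeMap hq
  -- if the combined mass is zero, nothing changed
  by_cases hs : q i + q j = 0
  · have hii : q i = 0 := le_antisymm (by nlinarith [hq.1 i, hq.1 j]) (hq.1 i)
    have hjj : q j = 0 := by linarith
    have : mergeMap u q = q := by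
      funext a; rw [hval a]
      by_cases hai : a = i
      · simp [hai, hii]
      · by_cases haj : a = j <;> simp [hai, haj, hii, hjj]
    rw [this]
  · have hspos : 0 < q i + q j := lt_of_le_of_ne (add_nonneg (hq.1 i) (hq.1 j)) (Ne.symm hs)
    set m := mergeMap u q with hm
    set σ := Equiv.swap i j with hσ
    have hmσ : IsPmf (m ∘ σ) := ⟨fun x => hqm.1 _, by rw [Function.comp_def, σ.tsum_eq m]; exact hqm.2⟩
    have hne : q i + q j ≠ 0 := hs
    have hne' : q j + q i ≠ 0 := fun h => hs (by linarith)
    set l := q j / (q i + q j) with hl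
    have hl0 : 0 ≤ l := div_nonneg (hq.1 j) hspos.le
    have hl1 : l ≤ 1 := (div_le_one hspos).mpr (by nlinarith [hq.1 i])
    have hmix : (fun x => l * m x + (1 - l) * (m ∘ σ) x) = q := by
      funext x
      have hmσv : (m ∘ σ) x = m (σ x) := rfl
      by_cases hxi : x = i
      · subst hxi
        rw [hmσv, hσ]; rw [Equiv.swap_apply_left]
        rw [hval x, hval j]
        simp only [if_pos rfl, Ne.symm hij, if_neg (Ne.symm hij), if_pos rfl]
        rw [hl]
        field_simp
        simp only [↓reduceIte]
        ring
      · by_cases hxj : x = j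
        · subst hxj
          rw [hmσv, hσ]; rw [Equiv.swap_apply_right]
          rw [hval x, hval i]
          simp only [if_pos rfl, if_neg (Ne.symm hij), if_neg hij]
          rw [hl]
          field_simp
          simp only [↓reduceIte]
          ring
        · rw [hmσv, hσ, Equiv.swap_apply_of_ne_of_ne hxi hxj, hval x]
          simp only [if_neg hxi, if_neg hxj]
          ring
    have := hqconc (φ m) m (m ∘ σ) hqm hmσ l hl0 hl1 le_rfl (by rw [hsym m σ])
    rwa [hmix] at this
end Phi

theorem mergeMap_of_bijective {f : ℕ → ℕ} (hfb : Function.Bijective f) (p : ℕ → ℝ) :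
    mergeMap f p = p ∘ ⇑(Equiv.ofBijective f hfb).symm := by
  funext a
  set σ := Equiv.ofBijective f hfb with hσ
  have hfσ : ∀ x, f x = σ x := fun _ => rfl
  have h1 : ∀ x, x ≠ σ.symm a → (if f x = a then p x else 0) = 0 := by
    intro x hx
    have hne : f x ≠ a := by
      intro h
      exact hx ((Equiv.eq_symm_apply σ).mpr ((hfσ x) ▸ h))
    simp [hne]
  have h2 : f (σ.symm a) = a := by rw [hfσ]; exact σ.apply_symm_apply a
  show (∑' x, if f x = a then p x else 0) = p (σ.symm a)
  rw [tsum_eq_single (σ.symm a) h1, h2]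
  simp

section Phi2
variable (φ : (ℕ → ℝ) → ENNReal)
    (hsym : ∀ (p : ℕ → ℝ) (σ : Equiv.Perm ℕ), φ (p ∘ σ) = φ p)
    (hqconc : ∀ (c : ENNReal) (p r : ℕ → ℝ), IsPmf p → IsPmf r →
      ∀ l : ℝ, 0 ≤ l → l ≤ 1 → c ≤ φ p → c ≤ φ r →
      c ≤ φ (fun x => l * p x + (1 - l) * r x))

include hsym hqconc in
theorem merge_le_finite : ∀ (n : ℕ) (f : ℕ → ℕ) (S : Finset ℕ), S.card ≤ n →
    (∀ x ∉ S, f x = x) → ∀ p : ℕ → ℝ, IsPmf p → φ (mergeMap f p) ≤ φ p := by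
  intro n
  induction n with
  | zero =>
    intro f S hcard hf p hp
    have hid : f = id := funext fun x =>
      hf x (by simp [Finset.card_eq_zero.mp (Nat.le_zero.mp hcard)])
    rw [mergeMap_of_bijective (hid ▸ Function.bijective_id), hsym]
  | succ n ih =>
    intro f S hcard hf p hp
    classical
    by_cases hex : ∃ x₀ ∈ S, f x₀ ≠ x₀ ∧ ∀ y, y ≠ x₀ → f y ≠ x₀
    · obtain ⟨x₀, hx₀S, hfx₀, hpre⟩ := hex
      set f' := Function.update f x₀ x₀ with hf'
      have hf'S : ∀ x ∉ S.erase x₀, f' x = x := by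
        intro x hx
        by_cases hxx : x = x₀
        · simp [hf', hxx]
        · have hxS : x ∉ S := fun hxS => hx (Finset.mem_erase.mpr ⟨hxx, hxS⟩)
          simp [hf', Function.update_of_ne hxx, hf x hxS]
      set q := mergeMap f' p with hqdef
      have hq : IsPmf q := pmf_mergeMap hp
      set u := Function.update id x₀ (f x₀) with hu
      have huS : ∀ x ∉ ({x₀} : Finset ℕ), u x = x := by
        intro x hx; simp only [Finset.mem_singleton] at hx
        simp [hu, Function.update_of_ne hx]
      have hqx₀ : q x₀ = p x₀ := by
        rw [hqdef, mergeMap]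
        refine (tsum_eq_single x₀ (fun y hy => ?_)).trans ?_
        · have : f' y = f y := Function.update_of_ne hy _ _
          rw [this]
          simp [hpre y hy]
        · simp [hf']
      have hfac : mergeMap f p = mergeMap u q := by
        funext a
        by_cases ha : a = x₀
        · subst ha
          have hL : (fun x => if f x = a then p x else 0) = fun _ => 0 := by
            funext x
            by_cases hxa : x = a
            · subst hxa; simp [hfx₀]
            · simp [hpre x hxa]
          have hR : (fun x => if u x = a then q x else 0) = fun _ => 0 := by
            funext x
            by_cases hxa : x = a
            · subst hxa; simp [hu, hfx₀]
            · simp [hu, Function.update_of_ne hxa, hxa]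
          rw [mergeMap, mergeMap, hL, hR, tsum_zero]
        · have hRHS : ∑ x ∈ insert a ({x₀} : Finset ℕ), (if u x = a then q x else 0)
              = q a + (if f x₀ = a then p x₀ else 0) := by
            rw [Finset.sum_insert (by simp [ha]), Finset.sum_singleton]
            simp only [hu, Function.update_of_ne ha, Function.update_self, id_eq, eq_self_iff_true, if_true]
            rw [hqx₀]
          have hins : insert a S = insert x₀ (insert a (S.erase x₀)) := by
            ext b
            simp only [Finset.mem_insert, Finset.mem_erase]
            by_cases hb : b = x₀
            · subst hb; simp [hx₀S, Ne.symm ha]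
            · simp [hb]
          have hnm : x₀ ∉ insert a (S.erase x₀) := by
            simp only [Finset.mem_insert, Finset.mem_erase, not_or]
            exact ⟨fun h => ha h.symm, fun h => h.1 rfl⟩
          have hsum2 : ∑ x ∈ insert a (S.erase x₀), (if f x = a then p x else 0)
              = q a := by
            rw [hqdef, mergeMap_eq_sum hf'S a]
            apply Finset.sum_congr rfl
            intro x hx
            have hxx₀ : x ≠ x₀ := by
              rcases Finset.mem_insert.mp hx with h | h
              · exact h ▸ ha
              · exact (Finset.mem_erase.mp h).1
            rw [hf', Function.update_of_ne hxx₀]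
          rw [mergeMap_eq_sum hf a, mergeMap_eq_sum huS a, hRHS, hins,
            Finset.sum_insert hnm, hsum2]
          ring
      rw [hfac]
      calc φ (mergeMap u q) ≤ φ q := mergeStep φ hsym hqconc (Ne.symm hfx₀) hq
        _ ≤ φ p := by
          apply ih f' (S.erase x₀) ?_ hf'S p hp
          rw [Finset.card_erase_of_mem hx₀S]
          omega
    · push_neg at hex
      have hall : ∀ a, f a ≠ a → ∃ y, y ≠ a ∧ f y = a := by
        intro a ha
        refine hex a ?_ ha
        by_contra h
        exact ha (hf a h)
      set T := S.filter (fun x => f x ≠ x) with hT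
      have hfix : ∀ b, b ∉ T → f b = b := by
        intro b hb
        by_cases hbS : b ∈ S
        · by_contra h
          exact hb (Finset.mem_filter.mpr ⟨hbS, h⟩)
        · exact hf b hbS
      have hTsub : T ⊆ T.image f := by
        intro x hx
        have hfx : f x ≠ x := (Finset.mem_filter.mp hx).2
        obtain ⟨y, hyx, hfy⟩ := hall x hfx
        have hyT : y ∈ T := by
          by_contra h
          exact hyx (by rw [← hfy, hfix y h])
        exact Finset.mem_image.mpr ⟨y, hyT, hfy⟩
      have hTeq : T.image f = T :=
        (Finset.eq_of_subset_of_card_le hTsub Finset.card_image_le).symm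
      have hinjT : Set.InjOn f T :=
        Finset.injOn_of_card_image_eq (by rw [hTeq])
      have hImT : ∀ a ∈ T, f a ∈ T := fun a ha => hTeq ▸ Finset.mem_image_of_mem f ha
      have hinj : Function.Injective f := by
        intro a b hab
        by_cases haT : a ∈ T <;> by_cases hbT : b ∈ T
        · exact hinjT haT hbT hab
        · exfalso; apply hbT
          have := hImT a haT
          rwa [hab, hfix b hbT] at this
        · exfalso; apply haT
          have := hImT b hbT
          rwa [← hab, hfix a haT] at this
        · rw [← hfix a haT, ← hfix b hbT, hab]
      have hsurj : Function.Surjective f := by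
        intro a
        by_cases haT : a ∈ T
        · obtain ⟨y, _, hfy⟩ := Finset.mem_image.mp (hTeq.symm ▸ haT)
          exact ⟨y, hfy⟩
        · exact ⟨a, hfix a haT⟩
      rw [mergeMap_of_bijective ⟨hinj, hsurj⟩, hsym]
end Phi2

section Phi3
variable (φ : (ℕ → ℝ) → ENNReal)
    (hsym : ∀ (p : ℕ → ℝ) (σ : Equiv.Perm ℕ), φ (p ∘ σ) = φ p)
    (hlsc : ∀ (P : ℕ → ℝ) (Pn : ℕ → ℕ → ℝ),
      (∀ x, Tendsto (fun n => Pn n x) atTop (𝓝 (P x))) →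
      φ P ≤ liminf (fun n => φ (Pn n)) atTop)
    (hqconc : ∀ (c : ENNReal) (p r : ℕ → ℝ), IsPmf p → IsPmf r →
      ∀ l : ℝ, 0 ≤ l → l ≤ 1 → c ≤ φ p → c ≤ φ r →
      c ≤ φ (fun x => l * p x + (1 - l) * r x))

include hsym hlsc hqconc in
theorem merge_le_all (g : ℕ → ℕ) (p : ℕ → ℝ) (hp : IsPmf p) :
    φ (mergeMap g p) ≤ φ p := by
  set fn : ℕ → ℕ → ℕ := fun n x => if x ≤ n then g x else x with hfn
  have hfnS : ∀ n, ∀ x ∉ Finset.range (n+1), fn n x = x := by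
    intro n x hx
    simp only [Finset.mem_range, not_lt] at hx
    simp [hfn, Nat.lt_of_succ_le hx, (by omega : ¬ x ≤ n)]
  have hble : ∀ n, φ (mergeMap (fn n) p) ≤ φ p := fun n =>
    merge_le_finite φ hsym hqconc ((Finset.range (n+1)).card) (fn n)
      (Finset.range (n+1)) le_rfl (hfnS n) p hp
  have hconv : ∀ a, Tendsto (fun n => mergeMap (fn n) p a) atTop (𝓝 (mergeMap g p a)) := by
    intro a
    have hval : ∀ n, mergeMap (fn n) p a =
        (∑ x ∈ Finset.range (n+1), if g x = a then p x else 0)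
          + (if n < a then p a else 0) := by
      intro n
      rw [mergeMap_eq_sum (hfnS n) a]
      by_cases han : a ≤ n
      · rw [Finset.insert_eq_self.mpr (Finset.mem_range.mpr (by omega))]
        rw [if_neg (by omega)]
        rw [add_zero]
        apply Finset.sum_congr rfl
        intro x hx
        have : x ≤ n := by
          have := Finset.mem_range.mp hx; omega
        simp [hfn, this]
      · rw [Finset.sum_insert (by simp [Finset.mem_range]; omega)]
        have h1 : fn n a = a := by simp [hfn, han]
        rw [h1, if_pos rfl, if_pos (by omega), add_comm]
        congr 1
        apply Finset.sum_congr rfl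
        intro x hx
        have : x ≤ n := by
          have := Finset.mem_range.mp hx; omega
        simp [hfn, this]
    have h1 : Tendsto (fun n => ∑ x ∈ Finset.range (n+1), if g x = a then p x else 0)
        atTop (𝓝 (mergeMap g p a)) := by
      have hs := (fiberSummable (f := g) hp a).hasSum
      exact hs.tendsto_sum_nat.comp (tendsto_add_atTop_nat 1)
    have h2 : Tendsto (fun n => if n < a then p a else 0) atTop (𝓝 (0 : ℝ)) := by
      apply Tendsto.congr' _ tendsto_const_nhds
      filter_upwards [eventually_ge_atTop a] with n hn
      rw [if_neg (by omega)]
    have := h1.add h2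
    rw [add_zero] at this
    exact this.congr (fun n => (hval n).symm)
  calc φ (mergeMap g p) ≤ liminf (fun n => φ (mergeMap (fn n) p)) atTop := hlsc _ _ hconv
    _ ≤ liminf (fun _ => φ p) atTop := Filter.liminf_le_liminf (Eventually.of_forall hble)
    _ = φ p := liminf_const _
end Phi3

theorem summable_mix {β : Type*} {q : β → ℝ} {W : β → ℕ → ℝ} (hq : IsPmf q)
    (hW : ∀ y, IsPmf (W y)) (x : ℕ) : Summable (fun y => q y * W y x) := by
  apply Summable.of_nonneg_of_le (fun y => mul_nonneg (hq.1 y) ((hW y).1 x))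
    (fun y => ?_) (pmfSummable hq)
  calc q y * W y x ≤ q y * 1 := mul_le_mul_of_nonneg_left (pmfLeOne (hW y) x) (hq.1 y)
    _ = q y := mul_one _

theorem mixPmf {β : Type*} {q : β → ℝ} {W : β → ℕ → ℝ} (hq : IsPmf q)
    (hW : ∀ y, IsPmf (W y)) : IsPmf (fun x => ∑' y, q y * W y x) := by
  have hnn : ∀ x, 0 ≤ ∑' y, q y * W y x :=
    fun x => tsum_nonneg fun y => mul_nonneg (hq.1 y) ((hW y).1 x)
  have key : ∑' x : ℕ, ENNReal.ofReal (∑' y, q y * W y x) = 1 := by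
    have h1 : ∀ x : ℕ, ENNReal.ofReal (∑' y, q y * W y x)
        = ∑' y, ENNReal.ofReal (q y) * ENNReal.ofReal (W y x) := by
      intro x
      rw [ENNReal.ofReal_tsum_of_nonneg (fun y => mul_nonneg (hq.1 y) ((hW y).1 x))
        (summable_mix hq hW x)]
      exact tsum_congr fun y => ENNReal.ofReal_mul (hq.1 y)
    rw [tsum_congr h1, ENNReal.tsum_comm]
    have h2 : ∀ y, ∑' x : ℕ, ENNReal.ofReal (q y) * ENNReal.ofReal (W y x)
        = ENNReal.ofReal (q y) := by
      intro y
      rw [ENNReal.tsum_mul_left, ← ENNReal.ofReal_tsum_of_nonneg (hW y).1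
        (pmfSummable (hW y)), (hW y).2, ENNReal.ofReal_one, mul_one]
    rw [tsum_congr h2, ← ENNReal.ofReal_tsum_of_nonneg hq.1 (pmfSummable hq), hq.2,
      ENNReal.ofReal_one]
  refine ⟨hnn, ?_⟩
  have hs : Summable (fun x => ∑' y, q y * W y x) := by
    have := ENNReal.summable_toReal (by rw [key]; exact ENNReal.one_ne_top)
    simpa [ENNReal.toReal_ofReal, hnn] using this
  have h3 : ENNReal.ofReal (∑' x, ∑' y, q y * W y x) = 1 := by
    rw [ENNReal.ofReal_tsum_of_nonneg hnn hs, key]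
  rw [← ENNReal.ofReal_one] at h3
  exact (ENNReal.ofReal_eq_ofReal_iff (tsum_nonneg hnn) (by norm_num)).mp h3

section Phi4
variable (φ : (ℕ → ℝ) → ENNReal)
    (hconc : ∀ p r : ℕ → ℝ, IsPmf p → IsPmf r → ∀ l : ℝ, 0 ≤ l → l ≤ 1 →
      ENNReal.ofReal l * φ p + ENNReal.ofReal (1 - l) * φ r ≤
        φ (fun x => l * p x + (1 - l) * r x))

include hconc in
theorem finJensenAux {ι : Type*} :
    ∀ (F : Finset ι) (lam : ι → ℝ) (p : ι → ℕ → ℝ) (r : ℕ → ℝ),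
      (∀ i ∈ F, 0 ≤ lam i) → (∀ i ∈ F, IsPmf (p i)) → IsPmf r →
      (∑ i ∈ F, lam i) ≤ 1 →
      ((∑ i ∈ F, ENNReal.ofReal (lam i) * φ (p i))
        + ENNReal.ofReal (1 - ∑ i ∈ F, lam i) * φ r)
        ≤ φ (fun x => (∑ i ∈ F, lam i * p i x) + (1 - ∑ i ∈ F, lam i) * r x) := by
  intro F
  classical
  induction F using Finset.induction_on with
  | empty =>
    intro lam p r _ _ hr _
    simp only [Finset.sum_empty, sub_zero, ENNReal.ofReal_one, one_mul, zero_add]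
    exact le_rfl
  | @insert a F haF ih =>
    intro lam p r hlam hp hr hsum
    simp only [Finset.sum_insert haF] at hsum ⊢
    have hl0 : 0 ≤ lam a := hlam a (Finset.mem_insert_self a F)
    have ht'0 : 0 ≤ ∑ i ∈ F, lam i :=
      Finset.sum_nonneg fun i hi => hlam i (Finset.mem_insert_of_mem hi)
    have hl1 : lam a ≤ 1 := by linarith
    by_cases hle : 1 - lam a = 0
    · have hlz : ∀ i ∈ F, lam i = 0 :=
        (Finset.sum_eq_zero_iff_of_nonneg
          (fun j hj => hlam j (Finset.mem_insert_of_mem hj))).mp (by linarith)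
      have hsz : ∑ i ∈ F, ENNReal.ofReal (lam i) * φ (p i) = 0 :=
        Finset.sum_eq_zero fun i hi => by rw [hlz i hi]; simp
      have hfun : (fun x => (lam a * p a x + ∑ i ∈ F, lam i * p i x)
          + (1 - (lam a + ∑ i ∈ F, lam i)) * r x) = p a := by
        funext x
        rw [Finset.sum_eq_zero fun i hi => by rw [hlz i hi, zero_mul]]
        have hla : lam a = 1 := by linarith
        have hz : (∑ i ∈ F, lam i) = 0 := by linarith
        rw [hla, hz]
        ring
      rw [hsz, add_zero, hfun]
      have hla : lam a = 1 := by linarith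
      have hz : (∑ i ∈ F, lam i) = 0 := by linarith
      rw [hla, hz]
      norm_num
    · have hlpos : 0 < 1 - lam a := lt_of_le_of_ne (by linarith) (Ne.symm hle)
      have hne : (1 : ℝ) - lam a ≠ 0 := hle
      set lam' : ι → ℝ := fun i => lam i / (1 - lam a) with hlam'
      have hsum' : ∑ i ∈ F, lam' i = (∑ i ∈ F, lam i) / (1 - lam a) := by
        rw [hlam', ← Finset.sum_div]
      have hlam'0 : ∀ i ∈ F, 0 ≤ lam' i :=
        fun i hi => div_nonneg (hlam i (Finset.mem_insert_of_mem hi)) hlpos.le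
      have hsum'le : ∑ i ∈ F, lam' i ≤ 1 := by
        rw [hsum']; exact (div_le_one hlpos).mpr (by linarith)
      have IH := ih lam' p r hlam'0 (fun i hi => hp i (Finset.mem_insert_of_mem hi)) hr hsum'le
      set r' : ℕ → ℝ := fun x => (∑ i ∈ F, lam' i * p i x) + (1 - ∑ i ∈ F, lam' i) * r x
        with hr'
      have hr'pmf : IsPmf r' := by
        constructor
        · intro x
          exact add_nonneg
            (Finset.sum_nonneg fun i hi => mul_nonneg (hlam'0 i hi)
              ((hp i (Finset.mem_insert_of_mem hi)).1 x))
            (mul_nonneg (by linarith [hsum'le]) (hr.1 x))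
        · have hsummable : ∀ i ∈ F, Summable (fun x => lam' i * p i x) :=
            fun i hi => (pmfSummable (hp i (Finset.mem_insert_of_mem hi))).mul_left _
          rw [hr']
          rw [Summable.tsum_add (summable_sum hsummable) ((pmfSummable hr).mul_left _),
            Summable.tsum_finsetSum hsummable]
          have hterm : ∀ i ∈ F, ∑' x, lam' i * p i x = lam' i := fun i hi => by
            rw [tsum_mul_left, (hp i (Finset.mem_insert_of_mem hi)).2, mul_one]
          rw [Finset.sum_congr rfl hterm, tsum_mul_left, hr.2, mul_one]
          ring
      have hIH' : (∑ i ∈ F, ENNReal.ofReal (lam' i) * φ (p i))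
          + ENNReal.ofReal (1 - ∑ i ∈ F, lam' i) * φ r ≤ φ r' := by
        rw [hr']; exact IH
      have hkey : ENNReal.ofReal (1 - lam a) * ((∑ i ∈ F, ENNReal.ofReal (lam' i) * φ (p i))
            + ENNReal.ofReal (1 - ∑ i ∈ F, lam' i) * φ r)
          = (∑ i ∈ F, ENNReal.ofReal (lam i) * φ (p i))
            + ENNReal.ofReal (1 - (lam a + ∑ i ∈ F, lam i)) * φ r := by
        rw [mul_add, Finset.mul_sum]
        congr 1
        · apply Finset.sum_congr rfl
          intro i hi
          rw [← mul_assoc, ← ENNReal.ofReal_mul hlpos.le]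
          congr 2
          rw [hlam']
          field_simp
        · rw [← mul_assoc, ← ENNReal.ofReal_mul hlpos.le]
          congr 2
          rw [hsum']
          field_simp
          ring
      have hmix : (fun x => lam a * p a x + (1 - lam a) * r' x)
          = (fun x => (lam a * p a x + ∑ i ∈ F, lam i * p i x)
              + (1 - (lam a + ∑ i ∈ F, lam i)) * r x) := by
        funext x
        simp only [hr']
        have h1 : ∑ i ∈ F, lam' i * p i x = (∑ i ∈ F, lam i * p i x) / (1 - lam a) := by
          rw [Finset.sum_congr rfl (fun i _ => div_mul_eq_mul_div (lam i) (1 - lam a) (p i x)),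
            ← Finset.sum_div]
        rw [h1, hsum']
        field_simp
        ring
      calc (ENNReal.ofReal (lam a) * φ (p a) + ∑ i ∈ F, ENNReal.ofReal (lam i) * φ (p i))
            + ENNReal.ofReal (1 - (lam a + ∑ i ∈ F, lam i)) * φ r
          = ENNReal.ofReal (lam a) * φ (p a)
            + ENNReal.ofReal (1 - lam a) * ((∑ i ∈ F, ENNReal.ofReal (lam' i) * φ (p i))
              + ENNReal.ofReal (1 - ∑ i ∈ F, lam' i) * φ r) := by rw [hkey]; ring
        _ ≤ ENNReal.ofReal (lam a) * φ (p a) + ENNReal.ofReal (1 - lam a) * φ r' :=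
            add_le_add_right (mul_le_mul_right hIH' _) _
        _ ≤ φ (fun x => lam a * p a x + (1 - lam a) * r' x) :=
            hconc (p a) r' (hp a (Finset.mem_insert_self a F)) hr'pmf (lam a) hl0 hl1
        _ = _ := by rw [hmix]
end Phi4


/-- For `φ : P(X) → [0,∞]` symmetric, concave, lower semicontinuous (and
bounded below by `0`), the generalized conditional information
`h_φ(X|Y) = E[φ(P_{X|Y})]` satisfies (i) `h_φ(X|Y) ≤ φ(P_X)`
(conditioning reduces information) and, assuming additionally that `φ` is
quasiconcave (hence Schur-concave), (ii) the data-processing inequality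
`h_φ(g(X)|Y) ≤ h_φ(X|Y)` for any deterministic map `g`. -/
theorem stmt_15 {β : Type*} (φ : (ℕ → ℝ) → ENNReal)
    (hsym : ∀ (p : ℕ → ℝ) (σ : Equiv.Perm ℕ), φ (p ∘ σ) = φ p)
    (hconc : ∀ p r : ℕ → ℝ, IsPmf p → IsPmf r → ∀ l : ℝ, 0 ≤ l → l ≤ 1 →
      ENNReal.ofReal l * φ p + ENNReal.ofReal (1 - l) * φ r ≤
        φ (fun x => l * p x + (1 - l) * r x))
    (hlsc : ∀ (P : ℕ → ℝ) (Pn : ℕ → ℕ → ℝ),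
      (∀ x, Tendsto (fun n => Pn n x) atTop (𝓝 (P x))) →
      φ P ≤ liminf (fun n => φ (Pn n)) atTop)
    (hqconc : ∀ (c : ENNReal) (p r : ℕ → ℝ), IsPmf p → IsPmf r →
      ∀ l : ℝ, 0 ≤ l → l ≤ 1 → c ≤ φ p → c ≤ φ r →
      c ≤ φ (fun x => l * p x + (1 - l) * r x))
    (q : β → ℝ) (W : β → ℕ → ℝ) (hq : IsPmf q) (hW : ∀ y, IsPmf (W y)) :
    (∑' y, ENNReal.ofReal (q y) * φ (W y) ≤ φ (fun x => ∑' y, q y * W y x)) ∧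
    (∀ g : ℕ → ℕ,
      ∑' y, ENNReal.ofReal (q y) * φ (fun a => ∑' x, if g x = a then W y x else 0) ≤
        ∑' y, ENNReal.ofReal (q y) * φ (W y)) := by
  constructor
  · -- part (i)
    set P : ℕ → ℝ := fun x => ∑' y, q y * W y x with hP
    have hPpmf : IsPmf P := mixPmf hq hW
    have main : ∀ F : Finset β, ∑ y ∈ F, ENNReal.ofReal (q y) * φ (W y) ≤ φ P := by
      intro F
      have hsumF : Summable (fun x => ∑ y ∈ F, q y * W y x) :=
        summable_sum fun y _ => (pmfSummable (hW y)).mul_left _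
      have htF : ∑' x, (∑ y ∈ F, q y * W y x) = ∑ y ∈ F, q y := by
        rw [Summable.tsum_finsetSum (fun y _ => (pmfSummable (hW y)).mul_left _)]
        exact Finset.sum_congr rfl fun y _ => by rw [tsum_mul_left, (hW y).2, mul_one]
      have hRnn : ∀ x, 0 ≤ P x - ∑ y ∈ F, q y * W y x := fun x => sub_nonneg.mpr
        (Summable.sum_le_tsum F (fun y _ => mul_nonneg (hq.1 y) ((hW y).1 x)) (summable_mix hq hW x))
      have hRsum : Summable (fun x => P x - ∑ y ∈ F, q y * W y x) :=
        (pmfSummable hPpmf).sub hsumF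
      have hRt : ∑' x, (P x - ∑ y ∈ F, q y * W y x) = 1 - ∑ y ∈ F, q y := by
        rw [Summable.tsum_sub (pmfSummable hPpmf) hsumF, hPpmf.2, htF]
      obtain ⟨r, hrpmf, hmixP⟩ : ∃ r : ℕ → ℝ, IsPmf r ∧
          (fun x => (∑ y ∈ F, q y * W y x) + (1 - ∑ y ∈ F, q y) * r x) = P := by
        by_cases hte : 1 - ∑ y ∈ F, q y = 0
        · refine ⟨fun x => if x = 0 then 1 else 0,
            ⟨fun x => by dsimp only; split <;> norm_num, by rw [tsum_ite_eq]⟩, ?_⟩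
          funext x
          rw [hte, zero_mul, add_zero]
          have h0 : P x - ∑ y ∈ F, q y * W y x = 0 := by
            have hle := Summable.le_tsum hRsum x (fun b _ => hRnn b)
            rw [hRt, hte] at hle
            linarith [hRnn x]
          linarith
        · refine ⟨fun x => (P x - ∑ y ∈ F, q y * W y x) / (1 - ∑ y ∈ F, q y),
            ⟨fun x => div_nonneg (hRnn x) ?_, ?_⟩, ?_⟩
          · have ht1 : ∑ y ∈ F, q y ≤ 1 := by
              rw [← hq.2]; exact Summable.sum_le_tsum F (fun y _ => hq.1 y) (pmfSummable hq)
            linarith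
          · rw [tsum_div_const, hRt, div_self hte]
          · funext x
            rw [mul_div_cancel₀ _ hte]
            ring
      calc ∑ y ∈ F, ENNReal.ofReal (q y) * φ (W y)
          ≤ (∑ y ∈ F, ENNReal.ofReal (q y) * φ (W y))
            + ENNReal.ofReal (1 - ∑ y ∈ F, q y) * φ r := le_self_add
        _ ≤ φ (fun x => (∑ y ∈ F, q y * W y x) + (1 - ∑ y ∈ F, q y) * r x) :=
            finJensenAux φ hconc F q W r (fun y _ => hq.1 y) (fun y _ => hW y) hrpmf
              (by rw [← hq.2]; exact Summable.sum_le_tsum F (fun y _ => hq.1 y) (pmfSummable hq))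
        _ = φ P := by rw [hmixP]
    rw [ENNReal.tsum_eq_iSup_sum]
    exact iSup_le main
  · -- part (ii)
    intro g
    refine ENNReal.tsum_le_tsum fun y => mul_le_mul_right ?_ _
    exact merge_le_all φ hsym hlsc hqconc g (W y) (hW y)
end
end
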